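/- In a braided multiplicity-free semi-simple tensor system over a commutative ring R, fix λ ∈ I and the homogeneous tuple λ̃ = (λ,…,λ) of length L. The braiding operators R_i = Σ_{μ∈I} R^{λλ}_μ p_i^{(μ)} on H_{λ̃} are invertible with inverse R_i^{-1} = Σ_{μ∈I} R̄^{λλ}_μ p_i^{(μ)}, and they satisfy the braid relations: R_i R_{i+1} R_i = R_{i+1} R_i R_{i+1} for 1 ≤ i ≤ L−2, and R_i R_{i'} = R_{i'} R_i whenever 1 ≤ i ≤ i'−2 ≤ L−3. -/

import Mathlib

open scoped Classical

noncomputable section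

/-- A multiplicity-free semi-simple tensor system over a commutative ring `R`,
with index set `I`, fusion constants `N`, and F-moves `F`, `Fbar`.
`F a b c d e f` denotes `(F^{abc}_d)^e_f` and `Fbar a b c d f e` denotes `(F̄^{abc}_d)^f_e`. -/
structure TensorSystem (R : Type*) [CommRing R] (I : Type*) where
  N : I → I → I → ℕ
  F : I → I → I → I → I → I → R
  Fbar : I → I → I → I → I → I → R
  N_le_one : ∀ a b c, N a b c ≤ 1
  N_assoc : ∀ a b c d, (∑ᶠ e, N a b e * N e c d) = ∑ᶠ e, N a e d * N b c e
  N_finite : ∀ a b, (Function.support fun c => N a b c).Finite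
  F_vanish : ∀ a b c d e f, N a b e * N b c f * N a f d * N e c d = 0 → F a b c d e f = 0
  Fbar_vanish : ∀ a b c d e f, N a b e * N b c f * N a f d * N e c d = 0 → Fbar a b c d f e = 0
  pentagon : ∀ a b c d e f g k l,
      (∑ᶠ h, F a b c g f h * F a h d e g k * F b c d k h l) = F f c d e g l * F a b l e f k
  F_Fbar : ∀ a b c d e e',
      (∑ᶠ f, F a b c d e f * Fbar a b c d f e')
        = (if e = e' then (1 : R) else 0) * (N a b e : R) * (N e c d : R)
  Fbar_F : ∀ a b c d f f',
      (∑ᶠ e, Fbar a b c d f' e * F a b c d e f)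
        = (if f = f' then (1 : R) else 0) * (N b c f : R) * (N a f d : R)

namespace TensorSystem

variable {R : Type*} [CommRing R] {I : Type*}

open Fin.NatCast in
/-- `μ = (μ₀, μ₁, …, μ_L)` is a fusion path for the tuple `λ̃ = (lam 1, …, lam L)`:
`μ₀ ∈ I0` and `N_{μ_{i-1} λ_i}^{μ_i} = 1` for `1 ≤ i ≤ L`. -/
def IsPath (TS : TensorSystem R I) (L : ℕ) (I0 : Set I) (lam : ℕ → I)
    (μ : Fin (L + 1) → I) : Prop :=
  μ 0 ∈ I0 ∧ ∀ i : ℕ, 1 ≤ i → i ≤ L →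
    TS.N (μ ((i - 1 : ℕ) : Fin (L + 1))) (lam i) (μ ((i : ℕ) : Fin (L + 1))) = 1

open Fin.NatCast in
/-- Matrix element `⟨μ'| p_i^{(ν)} |μ⟩` of the two-site projection operator. -/
def pMat (TS : TensorSystem R I) (L : ℕ) (lam : ℕ → I) (i : ℕ) (ν : I)
    (μ' μ : Fin (L + 1) → I) : R :=
  (∏ j ∈ Finset.univ.erase ((i : ℕ) : Fin (L + 1)), if μ j = μ' j then (1 : R) else 0)
    * TS.Fbar (μ ((i - 1 : ℕ) : Fin (L + 1))) (lam i) (lam (i + 1))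
        (μ ((i + 1 : ℕ) : Fin (L + 1))) ν (μ' ((i : ℕ) : Fin (L + 1)))
    * TS.F (μ ((i - 1 : ℕ) : Fin (L + 1))) (lam i) (lam (i + 1))
        (μ ((i + 1 : ℕ) : Fin (L + 1))) (μ ((i : ℕ) : Fin (L + 1))) ν

/-- Matrix elements of the composition of two operators on `H_{λ̃}`,
summing over the fusion-path basis. -/
def mulMat (TS : TensorSystem R I) (L : ℕ) (I0 : Set I) (lam : ℕ → I)
    (A B : (Fin (L + 1) → I) → (Fin (L + 1) → I) → R)
    (μ' μ : Fin (L + 1) → I) : R :=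
  ∑ᶠ μ'' ∈ {x : Fin (L + 1) → I | TS.IsPath L I0 lam x}, A μ' μ'' * B μ'' μ

/-- Two operators on `H_{λ̃}` are equal iff all their matrix elements between
fusion-path basis vectors agree. -/
def MatEqOn (TS : TensorSystem R I) (L : ℕ) (I0 : Set I) (lam : ℕ → I)
    (A B : (Fin (L + 1) → I) → (Fin (L + 1) → I) → R) : Prop :=
  ∀ μ' μ : Fin (L + 1) → I, TS.IsPath L I0 lam μ' → TS.IsPath L I0 lam μ → A μ' μ = B μ' μ

/-- Extended fusion numbers `N_{a a₁ ⋯ aₙ}^b` along a list `[a₁, …, aₙ]`. -/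
def Nseq (TS : TensorSystem R I) : I → List I → I → ℕ
  | a, [], b => if a = b then 1 else 0
  | a, c :: rest, b => ∑ᶠ x, TS.N a c x * Nseq TS x rest b

/-- `ν` acts one-dimensionally on the left of `μ`. -/
def ActsOneDimLeft (TS : TensorSystem R I) (ν μ : I) : Prop :=
  (∑ᶠ μ' : I, TS.N ν μ μ') = 1

/-- `ν` acts one-dimensionally on the right of `μ`. -/
def ActsOneDimRight (TS : TensorSystem R I) (ν μ : I) : Prop :=
  (∑ᶠ μ' : I, TS.N μ ν μ') = 1

end TensorSystem

/-- Matrix elements of the identity operator. -/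
def deltaMat {R : Type*} [CommRing R] {I : Type*} (L : ℕ)
    (μ' μ : Fin (L + 1) → I) : R :=
  ∏ j : Fin (L + 1), if μ j = μ' j then (1 : R) else 0

/-- Scalar multiple of a matrix of operator matrix elements. -/
def smulMat {R : Type*} [CommRing R] {α : Sort*} (c : R) (A : α → α → R) : α → α → R :=
  fun x y => c * A x y

/-- A braided multiplicity-free semi-simple tensor system: additionally `N` is
symmetric and there are braiding constants `Rm a b c = R^{ab}_c`,
`Rbarm a b c = R̄^{ab}_c` satisfying the hexagon relations. -/
structure BraidedTensorSystem (R : Type*) [CommRing R] (I : Type*) extends TensorSystem R I where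
  N_symm : ∀ a b c, N a b c = N b a c
  Rm : I → I → I → R
  Rbarm : I → I → I → R
  Rm_vanish : ∀ a b c, N a b c = 0 → Rm a b c = 0
  Rbarm_vanish : ∀ a b c, N a b c = 0 → Rbarm a b c = 0
  hexagonR : ∀ a b c d e g,
      Rm a c e * F a c b d e g * Rm b c g
        = ∑ᶠ f, F c a b d e f * Rm f c d * F a b c d f g
  hexagonRbar : ∀ a b c d e g,
      Rbarm a c e * F a c b d e g * Rbarm b c g
        = ∑ᶠ f, F c a b d e f * Rbarm f c d * F a b c d f g
  Rm_Rbarm : ∀ a b c, Rm a b c * Rbarm b a c = (N a b c : R)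

namespace BraidedTensorSystem

variable {R : Type*} [CommRing R] {I : Type*}

/-- Matrix elements of the braiding operator `R_i = Σ_m R^{λλ}_m p_i^{(m)}`
on a homogeneous chain `λ̃ = (lam0, …, lam0)`. -/
def Rmat (BTS : BraidedTensorSystem R I) (L : ℕ) (lam0 : I) (i : ℕ)
    (μ' μ : Fin (L + 1) → I) : R :=
  ∑ᶠ m : I, BTS.Rm lam0 lam0 m * BTS.toTensorSystem.pMat L (fun _ => lam0) i m μ' μ

/-- Matrix elements of the inverse braiding operator
`R_i⁻¹ = Σ_m R̄^{λλ}_m p_i^{(m)}`. -/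
def RbarMat (BTS : BraidedTensorSystem R I) (L : ℕ) (lam0 : I) (i : ℕ)
    (μ' μ : Fin (L + 1) → I) : R :=
  ∑ᶠ m : I, BTS.Rbarm lam0 lam0 m * BTS.toTensorSystem.pMat L (fun _ => lam0) i m μ' μ

end BraidedTensorSystem

/-!
Each `p_i^{(m)}` changes only the label `μ_i` of a path, through the matrix `F̄ F` of the fusion
`μ_{i-1} ⊗ λ ⊗ λ → μ_{i+1}`, so products of braiding operators collapse to sums of products of
local matrices. Invertibility is then the unitarity `F F̄ = F̄ F = 1` of the F-moves together with
`R^{λλ}_m R̄^{λλ}_m = 1`, and operators on distant sites commute because they change disjoint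
labels.

For the braid relation, the three-strand local matrices are conjugated into the tree basis
`a ⊗ ((λ ⊗ λ)_f ⊗ λ)_t → d`. There `R_i` is diagonal and `R_{i+1}` is `F̄^{λλλ} R F^{λλλ}`: the
pentagon equation relates the two changes of basis, and its `F̄`-version follows because a left
and a right inverse agree. In this basis the braid relation is the hexagon equation.
-/

namespace TensorSystem

variable {R : Type*} [CommRing R] {I : Type*}

section Fusion

variable (T : TensorSystem R I)

theorem N_eq_zero_or_one (a b c : I) : T.N a b c = 0 ∨ T.N a b c = 1 := by
  have := T.N_le_one a b c; omega

theorem N_eq_one {a b c : I} (h : T.N a b c ≠ 0) : T.N a b c = 1 :=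
  (T.N_eq_zero_or_one a b c).resolve_left h

variable {T}

theorem natCast_N_mul {a b c : I} {x : R} (hx : T.N a b c = 0 → x = 0) :
    (T.N a b c : R) * x = x := by
  rcases T.N_eq_zero_or_one a b c with h | h <;> simp [h, hx]

theorem natCast_N_mul_self (a b c : I) : (T.N a b c : R) * T.N a b c = T.N a b c :=
  natCast_N_mul fun h => by simp [h]

theorem mul_natCast_N {a b c : I} {x : R} (hx : T.N a b c = 0 → x = 0) :
    x * T.N a b c = x := by
  rw [mul_comm, natCast_N_mul hx]

theorem F_eq_zero_of_N_abe {a b c d e f : I} (h : T.N a b e = 0) : T.F a b c d e f = 0 :=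
  T.F_vanish a b c d e f (by simp [h])

theorem F_eq_zero_of_N_bcf {a b c d e f : I} (h : T.N b c f = 0) : T.F a b c d e f = 0 :=
  T.F_vanish a b c d e f (by simp [h])

theorem F_eq_zero_of_N_afd {a b c d e f : I} (h : T.N a f d = 0) : T.F a b c d e f = 0 :=
  T.F_vanish a b c d e f (by simp [h])

theorem F_eq_zero_of_N_ecd {a b c d e f : I} (h : T.N e c d = 0) : T.F a b c d e f = 0 :=
  T.F_vanish a b c d e f (by simp [h])

theorem Fbar_eq_zero_of_N_abe {a b c d e f : I} (h : T.N a b e = 0) : T.Fbar a b c d f e = 0 :=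
  T.Fbar_vanish a b c d e f (by simp [h])

theorem Fbar_eq_zero_of_N_bcf {a b c d e f : I} (h : T.N b c f = 0) : T.Fbar a b c d f e = 0 :=
  T.Fbar_vanish a b c d e f (by simp [h])

theorem Fbar_eq_zero_of_N_afd {a b c d e f : I} (h : T.N a f d = 0) : T.Fbar a b c d f e = 0 :=
  T.Fbar_vanish a b c d e f (by simp [h])

theorem Fbar_eq_zero_of_N_ecd {a b c d e f : I} (h : T.N e c d = 0) : T.Fbar a b c d f e = 0 :=
  T.Fbar_vanish a b c d e f (by simp [h])

variable (T) in
def fusionSupport (a b : I) : Finset I := (T.N_finite a b).toFinset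

theorem mem_fusionSupport {a b c : I} : c ∈ T.fusionSupport a b ↔ T.N a b c ≠ 0 :=
  (T.N_finite a b).mem_toFinset

theorem notMem_fusionSupport {a b c : I} : c ∉ T.fusionSupport a b ↔ T.N a b c = 0 := by
  rw [mem_fusionSupport, not_not]

theorem sum_F_mul_Fbar {a b c d e e' : I} {s : Finset I} (hs : ∀ f, T.N b c f ≠ 0 → f ∈ s) :
    ∑ f ∈ s, T.F a b c d e f * T.Fbar a b c d f e'
      = (if e = e' then 1 else 0) * (T.N a b e : R) * T.N e c d := by
  rw [← T.F_Fbar, finsum_eq_sum_of_support_subset]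
  intro f hf
  by_contra hfs
  exact hf (by simp [F_eq_zero_of_N_bcf (not_imp_comm.1 (hs f) hfs)])

theorem sum_Fbar_mul_F {a b c d f f' : I} {s : Finset I} (hs : ∀ e, T.N a b e ≠ 0 → e ∈ s) :
    ∑ e ∈ s, T.Fbar a b c d f' e * T.F a b c d e f
      = (if f = f' then 1 else 0) * (T.N b c f : R) * T.N a f d := by
  rw [← T.Fbar_F, finsum_eq_sum_of_support_subset]
  intro e he
  by_contra hes
  exact he (by simp [F_eq_zero_of_N_abe (not_imp_comm.1 (hs e) hes)])

theorem sum_pentagon {a b c d e f g k l : I} {s : Finset I} (hs : ∀ h, T.N b c h ≠ 0 → h ∈ s) :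
    ∑ h ∈ s, T.F a b c g f h * T.F a h d e g k * T.F b c d k h l
      = T.F f c d e g l * T.F a b l e f k := by
  rw [← T.pentagon, finsum_eq_sum_of_support_subset]
  intro h hh
  by_contra hhs
  exact hh (by simp [F_eq_zero_of_N_bcf (c := c) (not_imp_comm.1 (hs h) hhs)])

theorem exists_N_ne_zero_of_N_mul_N {a b c x y : I} (hx : T.N a b x ≠ 0) (hy : T.N x c y ≠ 0) :
    ∃ f, T.N b c f ≠ 0 ∧ T.N a f y ≠ 0 := by
  by_contra! hno
  have hsum := T.N_assoc a b c y
  have hzero : ∑ᶠ e, T.N a e y * T.N b c e = 0 :=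
    finsum_eq_zero_of_forall_eq_zero fun e => by
      by_cases h : T.N b c e = 0 <;> simp [h, hno]
  rw [hzero, finsum_eq_sum_of_support_subset (s := T.fusionSupport a b) _ fun e he =>
    mem_fusionSupport.2 fun h0 => he (by simp [h0])] at hsum
  exact Nat.mul_ne_zero hx hy (Finset.sum_eq_zero_iff.1 hsum x (mem_fusionSupport.2 hx))

end Fusion

section Paths

variable {T : TensorSystem R I} {L : ℕ} {I0 : Set I} {lam : ℕ → I} {μ : Fin (L + 1) → I}

open Fin.NatCast in
/-- The cast wraps around modulo `L + 1`, so only `j ≤ L` name distinct sites. -/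
abbrev site (L j : ℕ) : Fin (L + 1) := (j : Fin (L + 1))

theorem site_ne {j k : ℕ} (hj : j ≤ L) (hk : k ≤ L) (h : j ≠ k) : site L j ≠ site L k := by
  intro he
  have := congrArg Fin.val he
  simp only [Fin.val_natCast, Nat.mod_eq_of_lt (Nat.lt_succ_of_le hj),
    Nat.mod_eq_of_lt (Nat.lt_succ_of_le hk)] at this
  exact h this

theorem IsPath.N_site (hμ : T.IsPath L I0 lam μ) {j : ℕ} (hj : 1 ≤ j) (hjL : j ≤ L) :
    T.N (μ (site L (j - 1))) (lam j) (μ (site L j)) = 1 :=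
  hμ.2 j hj hjL

theorem IsPath.N_site_succ (hμ : T.IsPath L I0 lam μ) {j : ℕ} (hjL : j + 1 ≤ L) :
    T.N (μ (site L j)) (lam (j + 1)) (μ (site L (j + 1))) = 1 := by
  simpa using hμ.2 (j + 1) (by omega) hjL

end Paths

end TensorSystem

namespace BraidedTensorSystem

open TensorSystem Function

variable {R : Type*} [CommRing R] {I : Type*}

section Local

variable (B : BraidedTensorSystem R I) (l : I)

/-- The matrix element `⟨x'| Σ_m r_m p^{(m)} |x⟩` of a two-site operator acting on the
middle label of `a → x → y` along the homogeneous chain `λ = l`. -/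
def localMat (r : I → R) (a y x' x : I) : R :=
  ∑ᶠ m, r m * B.Fbar a l l y m x' * B.F a l l y x m

variable {B l}

theorem sum_hexagon {a b c d e g : I} {s : Finset I} (hs : ∀ f, B.N a b f ≠ 0 → f ∈ s) :
    ∑ f ∈ s, B.F c a b d e f * B.Rm f c d * B.F a b c d f g
      = B.Rm a c e * B.F a c b d e g * B.Rm b c g := by
  rw [B.hexagonR, finsum_eq_sum_of_support_subset]
  intro f hf
  by_contra hfs
  exact hf (by simp [F_eq_zero_of_N_abe (not_imp_comm.1 (hs f) hfs)])

theorem localMat_eq_sum {r : I → R} (hr : ∀ m, B.N l l m = 0 → r m = 0) (a y x' x : I) :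
    B.localMat l r a y x' x
      = ∑ m ∈ B.fusionSupport l l, r m * B.Fbar a l l y m x' * B.F a l l y x m := by
  refine finsum_eq_sum_of_support_subset _ fun m hm => mem_fusionSupport.2 fun h0 => ?_
  exact hm (by simp [hr m h0])

theorem localMat_eq_zero_of_bra_left {r : I → R} {a y x' x : I} (h : B.N a l x' = 0) :
    B.localMat l r a y x' x = 0 :=
  finsum_eq_zero_of_forall_eq_zero fun m => by simp [Fbar_eq_zero_of_N_abe h]

theorem localMat_eq_zero_of_bra_right {r : I → R} {a y x' x : I} (h : B.N x' l y = 0) :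
    B.localMat l r a y x' x = 0 :=
  finsum_eq_zero_of_forall_eq_zero fun m => by simp [Fbar_eq_zero_of_N_ecd h]

theorem localMat_eq_zero_of_ket_left {r : I → R} {a y x' x : I} (h : B.N a l x = 0) :
    B.localMat l r a y x' x = 0 :=
  finsum_eq_zero_of_forall_eq_zero fun m => by simp [F_eq_zero_of_N_abe h]

theorem localMat_eq_zero_of_ket_right {r : I → R} {a y x' x : I} (h : B.N x l y = 0) :
    B.localMat l r a y x' x = 0 :=
  finsum_eq_zero_of_forall_eq_zero fun m => by simp [F_eq_zero_of_N_ecd h]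

theorem sum_localMat_mul_localMat {r r' : I → R} (hr : ∀ m, B.N l l m = 0 → r m = 0)
    (hr' : ∀ m, B.N l l m = 0 → r' m = 0) (hrr' : ∀ m, r m * r' m = B.N l l m) (a y x' x : I) :
    ∑ᶠ z, B.localMat l r a y x' z * B.localMat l r' a y z x
      = (if x = x' then 1 else 0) * (B.N a l x : R) * B.N x l y := by
  set S := B.fusionSupport l l
  rw [finsum_eq_sum_of_support_subset (s := B.fusionSupport a l) _ fun z hz =>
    mem_fusionSupport.2 fun h0 => hz (by simp [localMat_eq_zero_of_ket_left h0])]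
  calc ∑ z ∈ B.fusionSupport a l, B.localMat l r a y x' z * B.localMat l r' a y z x
      = ∑ m ∈ S, ∑ m' ∈ S, r m * B.Fbar a l l y m x' * r' m' * B.F a l l y x m' *
          ∑ z ∈ B.fusionSupport a l, B.Fbar a l l y m' z * B.F a l l y z m := by
        simp_rw [localMat_eq_sum hr, localMat_eq_sum hr', Finset.sum_mul_sum, Finset.mul_sum]
        rw [Finset.sum_comm]
        refine Finset.sum_congr rfl fun m _ => ?_
        rw [Finset.sum_comm]
        refine Finset.sum_congr rfl fun m' _ => Finset.sum_congr rfl fun z _ => by ring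
    _ = ∑ m ∈ S, (r m * r' m) * B.N a m y * (B.F a l l y x m * B.Fbar a l l y m x') := by
        refine Finset.sum_congr rfl fun m hm => ?_
        rw [Finset.sum_eq_single_of_mem m hm fun m' _ hm' => by
          rw [sum_Fbar_mul_F fun e he => mem_fusionSupport.2 he, if_neg hm'.symm]; ring]
        rw [sum_Fbar_mul_F fun e he => mem_fusionSupport.2 he, if_pos rfl,
          B.N_eq_one (mem_fusionSupport.1 hm)]
        ring
    _ = ∑ m ∈ S, B.F a l l y x m * B.Fbar a l l y m x' := by
        refine Finset.sum_congr rfl fun m _ => ?_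
        rw [hrr', mul_assoc, natCast_N_mul fun h => by simp [F_eq_zero_of_N_bcf h],
          natCast_N_mul fun h => by simp [F_eq_zero_of_N_afd h]]
    _ = _ := sum_F_mul_Fbar fun f hf => mem_fusionSupport.2 hf

end Local

section TreeBasis

variable (B : BraidedTensorSystem R I) (l a d : I)

/-- Contains the end label `y` of every path `a → x → y` along `λ, λ`. -/
def pathLabels : Finset I := (B.fusionSupport l l).biUnion fun f => B.fusionSupport a f

/-- Contains the root label `t` of every tree `(λ ⊗ λ)_f ⊗ λ → t`. -/
def treeLabels : Finset I := (B.fusionSupport l l).biUnion fun f => B.fusionSupport f l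

/-- Change of basis from the path basis `a → x → y → d` to the tree basis
`a ⊗ ((λ ⊗ λ)_v ⊗ λ)_t → d`. -/
def pathToLeftTree (v t x y : I) : R := B.F a l l y x v * B.F a v l d y t

def leftTreeToPath (f t x y : I) : R := B.Fbar a f l d t y * B.Fbar a l l y f x

/-- Change of basis from the path basis to the tree basis `a ⊗ (λ ⊗ (λ ⊗ λ)_g)_t → d`. -/
def pathToRightTree (g t x y : I) : R := B.F x l l d y g * B.F a l g d x t

def rightTreeToPath (g t x y : I) : R := B.Fbar a l g d t x * B.Fbar x l l d g y

def treeProj (v t : I) : R := (B.N l l v : R) * B.N v l t * B.N a t d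

variable {B l a d}

theorem mem_pathLabels {y : I} : y ∈ B.pathLabels l a ↔ ∃ f, B.N l l f ≠ 0 ∧ B.N a f y ≠ 0 := by
  simp [pathLabels, mem_fusionSupport]

theorem mem_treeLabels {t : I} : t ∈ B.treeLabels l ↔ ∃ f, B.N l l f ≠ 0 ∧ B.N f l t ≠ 0 := by
  simp [treeLabels, mem_fusionSupport]

theorem mem_treeLabels_of_N {g t : I} (hg : B.N l l g ≠ 0) (ht : B.N l g t ≠ 0) :
    t ∈ B.treeLabels l :=
  mem_treeLabels.2 ⟨g, hg, B.N_symm l g t ▸ ht⟩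

theorem mem_pathLabels_of_N {x y : I} (hx : B.N a l x ≠ 0) (hxy : B.N x l y ≠ 0) :
    y ∈ B.pathLabels l a :=
  mem_pathLabels.2 (exists_N_ne_zero_of_N_mul_N hx hxy)

theorem sum_pathToLeftTree_mul_leftTreeToPath {v : I} (hv : B.N l l v ≠ 0) (u t t' : I) :
    ∑ p ∈ B.fusionSupport a l ×ˢ B.pathLabels l a,
        B.pathToLeftTree l a d v t p.1 p.2 * B.leftTreeToPath l a d u t' p.1 p.2
      = if v = u then if t = t' then B.treeProj l a d v t else 0 else 0 := by
  rw [Finset.sum_product, Finset.sum_comm]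
  calc ∑ y ∈ B.pathLabels l a, ∑ x ∈ B.fusionSupport a l,
        B.pathToLeftTree l a d v t x y * B.leftTreeToPath l a d u t' x y
      = ∑ y ∈ B.pathLabels l a, B.F a v l d y t * B.Fbar a u l d t' y *
          ∑ x ∈ B.fusionSupport a l, B.Fbar a l l y u x * B.F a l l y x v := by
        simp only [Finset.mul_sum, pathToLeftTree, leftTreeToPath]
        exact Finset.sum_congr rfl fun y _ => Finset.sum_congr rfl fun x _ => by ring
    _ = if v = u then ∑ y ∈ B.pathLabels l a, B.Fbar a v l d t' y * B.F a v l d y t else 0 := by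
        simp only [sum_Fbar_mul_F fun e he => mem_fusionSupport.2 he, B.N_eq_one hv]
        split_ifs with h
        · subst h
          refine Finset.sum_congr rfl fun y _ => ?_
          rw [Nat.cast_one, one_mul, one_mul, mul_comm,
            natCast_N_mul fun h => by simp [F_eq_zero_of_N_abe h], mul_comm]
        · simp
    _ = _ := by
        rw [sum_Fbar_mul_F fun e he => mem_pathLabels.2 ⟨v, hv, he⟩, treeProj, B.N_eq_one hv]
        split_ifs <;> ring

theorem sum_pathToRightTree_mul_rightTreeToPath (x y x' y' : I) :
    ∑ q ∈ B.fusionSupport l l ×ˢ B.treeLabels l,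
        B.pathToRightTree l a d q.1 q.2 x y * B.rightTreeToPath l a d q.1 q.2 x' y'
      = if x = x' then if y = y' then (B.N a l x : R) * B.N x l y * B.N y l d else 0 else 0 := by
  rw [Finset.sum_product]
  calc ∑ g ∈ B.fusionSupport l l, ∑ t ∈ B.treeLabels l,
        B.pathToRightTree l a d g t x y * B.rightTreeToPath l a d g t x' y'
      = ∑ g ∈ B.fusionSupport l l, B.F x l l d y g * B.Fbar x' l l d g y' *
          ∑ t ∈ B.treeLabels l, B.F a l g d x t * B.Fbar a l g d t x' := by
        simp only [Finset.mul_sum, pathToRightTree, rightTreeToPath]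
        exact Finset.sum_congr rfl fun g _ => Finset.sum_congr rfl fun t _ => by ring
    _ = if x = x' then (B.N a l x : R) *
          ∑ g ∈ B.fusionSupport l l, B.F x l l d y g * B.Fbar x l l d g y' else 0 := by
        split_ifs with hx
        · subst hx
          rw [Finset.mul_sum]
          refine Finset.sum_congr rfl fun g hg => ?_
          rw [sum_F_mul_Fbar fun t ht => mem_treeLabels_of_N (mem_fusionSupport.1 hg) ht,
            if_pos rfl, one_mul, ← mul_assoc, mul_natCast_N fun h => by simp [F_eq_zero_of_N_afd h]]
          ring
        · exact Finset.sum_eq_zero fun g hg => by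
            rw [sum_F_mul_Fbar fun t ht => mem_treeLabels_of_N (mem_fusionSupport.1 hg) ht,
              if_neg hx]
            ring
    _ = _ := by
        rw [sum_F_mul_Fbar fun g hg => mem_fusionSupport.2 hg]
        split_ifs <;> ring

theorem sum_pathToLeftTree_mul_F (g t x y : I) :
    ∑ v ∈ B.fusionSupport l l, B.pathToLeftTree l a d v t x y * B.F l l l t v g
      = B.pathToRightTree l a d g t x y :=
  sum_pentagon fun _ hh => mem_fusionSupport.2 hh

theorem sum_Fbar_mul_leftTreeToPath_mul_pathToRightTree (g t g' t' : I) :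
    ∑ p ∈ B.fusionSupport a l ×ˢ B.pathLabels l a,
        (∑ f ∈ B.fusionSupport l l, B.Fbar l l l t g f * B.leftTreeToPath l a d f t p.1 p.2) *
          B.pathToRightTree l a d g' t' p.1 p.2
      = if g' = g then if t = t' then (B.N l l g : R) * B.N l g t * B.N a t d else 0 else 0 := by
  calc ∑ p ∈ B.fusionSupport a l ×ˢ B.pathLabels l a,
        (∑ f ∈ B.fusionSupport l l, B.Fbar l l l t g f * B.leftTreeToPath l a d f t p.1 p.2) *
          B.pathToRightTree l a d g' t' p.1 p.2
      = ∑ f ∈ B.fusionSupport l l, ∑ f' ∈ B.fusionSupport l l,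
          B.Fbar l l l t g f * B.F l l l t' f' g' *
          ∑ p ∈ B.fusionSupport a l ×ˢ B.pathLabels l a,
            B.pathToLeftTree l a d f' t' p.1 p.2 * B.leftTreeToPath l a d f t p.1 p.2 := by
        simp only [← sum_pathToLeftTree_mul_F]
        simp only [Finset.sum_mul_sum]
        rw [Finset.sum_comm]
        refine Finset.sum_congr rfl fun f _ => ?_
        rw [Finset.sum_comm]
        refine Finset.sum_congr rfl fun f' _ => ?_
        rw [Finset.mul_sum]
        exact Finset.sum_congr rfl fun p _ => by ring
    _ = if t = t' then (B.N a t d : R) *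
          ∑ f ∈ B.fusionSupport l l, B.Fbar l l l t g f * B.F l l l t f g' else 0 := by
        have hW (f f' : I) (hf' : f' ∈ B.fusionSupport l l) :=
          sum_pathToLeftTree_mul_leftTreeToPath (a := a) (d := d) (mem_fusionSupport.1 hf') f t' t
        split_ifs with ht
        · subst ht
          rw [Finset.mul_sum]
          refine Finset.sum_congr rfl fun f hf => ?_
          rw [Finset.sum_eq_single_of_mem f hf fun f' hf' hne => by
            rw [hW f f' hf', if_neg hne, mul_zero], hW f f hf, if_pos rfl, if_pos rfl, treeProj,
            mul_comm, mul_assoc, mul_assoc,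
            natCast_N_mul fun h => by simp [F_eq_zero_of_N_abe h],
            natCast_N_mul fun h => by simp [F_eq_zero_of_N_ecd h]]
        · exact Finset.sum_eq_zero fun f _ => Finset.sum_eq_zero fun f' hf' => by
            simp [hW f f' hf', Ne.symm ht]
    _ = _ := by
        rw [sum_Fbar_mul_F fun e he => mem_fusionSupport.2 he]
        split_ifs with ht hg <;> (try subst hg) <;> ring

theorem natCast_N_mul_rightTreeToPath (g t x y : I) :
    (B.N l l g : R) * B.N l g t * B.N a t d * B.rightTreeToPath l a d g t x y
      = B.rightTreeToPath l a d g t x y := by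
  simp only [rightTreeToPath, mul_assoc]
  rw [natCast_N_mul fun h => by simp [Fbar_eq_zero_of_N_bcf h],
    natCast_N_mul fun h => by simp [Fbar_eq_zero_of_N_bcf h],
    natCast_N_mul fun h => by simp [Fbar_eq_zero_of_N_afd h]]

/-- The pentagon equation for `F̄`: the composite `F̄^{λλλ} ∘ leftTreeToPath` is the inverse
`rightTreeToPath` of `pathToRightTree = F^{λλλ} ∘ pathToLeftTree`, since a left inverse and a
right inverse agree. -/
theorem sum_Fbar_mul_leftTreeToPath {x y : I} (hx : B.N a l x ≠ 0) (hxy : B.N x l y ≠ 0)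
    (hyd : B.N y l d ≠ 0) (g t : I) :
    ∑ f ∈ B.fusionSupport l l, B.Fbar l l l t g f * B.leftTreeToPath l a d f t x y
      = B.rightTreeToPath l a d g t x y := by
  let S (p : I × I) : R :=
    ∑ f ∈ B.fusionSupport l l, B.Fbar l l l t g f * B.leftTreeToPath l a d f t p.1 p.2
  calc S (x, y)
      = ∑ p ∈ B.fusionSupport a l ×ˢ B.pathLabels l a, S p *
          ∑ q ∈ B.fusionSupport l l ×ˢ B.treeLabels l,
            B.pathToRightTree l a d q.1 q.2 p.1 p.2 * B.rightTreeToPath l a d q.1 q.2 x y := by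
        simp only [sum_pathToRightTree_mul_rightTreeToPath, mul_ite, mul_zero]
        rw [Finset.sum_eq_single_of_mem (x, y)
          (Finset.mem_product.2 ⟨mem_fusionSupport.2 hx, mem_pathLabels_of_N hx hxy⟩)
          fun p _ hp => by split_ifs with h₁ h₂ <;> [exact absurd (Prod.ext h₁ h₂) hp; rfl; rfl]]
        simp [B.N_eq_one hx, B.N_eq_one hxy, B.N_eq_one hyd]
    _ = ∑ q ∈ B.fusionSupport l l ×ˢ B.treeLabels l,
          (∑ p ∈ B.fusionSupport a l ×ˢ B.pathLabels l a,
            S p * B.pathToRightTree l a d q.1 q.2 p.1 p.2) *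
            B.rightTreeToPath l a d q.1 q.2 x y := by
        simp only [Finset.mul_sum, Finset.sum_mul]
        rw [Finset.sum_comm]
        exact Finset.sum_congr rfl fun q _ => Finset.sum_congr rfl fun p _ => by ring
    _ = _ := by
        simp only [S, sum_Fbar_mul_leftTreeToPath_mul_pathToRightTree]
        simp only [Finset.sum_product, ite_mul, zero_mul, Finset.sum_ite_irrel,
          Finset.sum_const_zero, Finset.sum_ite_eq, Finset.sum_ite_eq',
          natCast_N_mul_rightTreeToPath]
        by_cases hg : B.N l l g = 0
        · simp [mem_fusionSupport, hg, rightTreeToPath, Fbar_eq_zero_of_N_bcf hg]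
        by_cases ht : B.N l g t = 0
        · simp [rightTreeToPath, Fbar_eq_zero_of_N_bcf ht]
        simp [mem_fusionSupport.2 hg, mem_treeLabels_of_N hg ht]

variable (B l a d) in
/-- The matrix in the path basis of the operator acting on the tree basis by `M t f v` in each
block of fixed `t`. -/
def toPathMat (M : I → I → I → R) (x₁ y₁ x₂ y₂ : I) : R :=
  ∑ w ∈ B.treeLabels l ×ˢ (B.fusionSupport l l ×ˢ B.fusionSupport l l),
    B.leftTreeToPath l a d w.2.1 w.1 x₁ y₁ * M w.1 w.2.1 w.2.2 *
      B.pathToLeftTree l a d w.2.2 w.1 x₂ y₂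

variable (B l a d) in
/-- Composition of block operators in the tree basis: `leftTreeToPath` followed by
`pathToLeftTree` is the projection `treeProj`, not the identity. -/
def treeMul (M M' : I → I → I → R) (t f v : I) : R :=
  ∑ u ∈ B.fusionSupport l l, M t f u * B.treeProj l a d u t * M' t u v

theorem toPathMat_eq_sum (M : I → I → I → R) (x₁ y₁ x₂ y₂ : I) :
    B.toPathMat l a d M x₁ y₁ x₂ y₂ = ∑ t ∈ B.treeLabels l, ∑ f ∈ B.fusionSupport l l,
      ∑ v ∈ B.fusionSupport l l,
        B.leftTreeToPath l a d f t x₁ y₁ * M t f v * B.pathToLeftTree l a d v t x₂ y₂ := by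
  simp only [toPathMat, Finset.sum_product]

theorem sum_toPathMat_mul_toPathMat (M M' : I → I → I → R) (x₁ y₁ x₂ y₂ : I) :
    ∑ p ∈ B.fusionSupport a l ×ˢ B.pathLabels l a,
        B.toPathMat l a d M x₁ y₁ p.1 p.2 * B.toPathMat l a d M' p.1 p.2 x₂ y₂
      = B.toPathMat l a d (B.treeMul l a d M M') x₁ y₁ x₂ y₂ := by
  set W := B.treeLabels l ×ˢ (B.fusionSupport l l ×ˢ B.fusionSupport l l)
  calc ∑ p ∈ B.fusionSupport a l ×ˢ B.pathLabels l a,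
        B.toPathMat l a d M x₁ y₁ p.1 p.2 * B.toPathMat l a d M' p.1 p.2 x₂ y₂
      = ∑ w ∈ W, ∑ w' ∈ W,
          B.leftTreeToPath l a d w.2.1 w.1 x₁ y₁ * M w.1 w.2.1 w.2.2 *
            (M' w'.1 w'.2.1 w'.2.2 * B.pathToLeftTree l a d w'.2.2 w'.1 x₂ y₂) *
          ∑ p ∈ B.fusionSupport a l ×ˢ B.pathLabels l a,
            B.pathToLeftTree l a d w.2.2 w.1 p.1 p.2 *
              B.leftTreeToPath l a d w'.2.1 w'.1 p.1 p.2 := by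
        simp only [toPathMat, Finset.sum_mul_sum]
        rw [Finset.sum_comm]
        refine Finset.sum_congr rfl fun w _ => ?_
        rw [Finset.sum_comm]
        refine Finset.sum_congr rfl fun w' _ => ?_
        rw [Finset.mul_sum]
        exact Finset.sum_congr rfl fun p _ => by ring
    _ = ∑ w ∈ W, ∑ v' ∈ B.fusionSupport l l,
          B.leftTreeToPath l a d w.2.1 w.1 x₁ y₁ * M w.1 w.2.1 w.2.2 *
            B.treeProj l a d w.2.2 w.1 * M' w.1 w.2.2 v' *
            B.pathToLeftTree l a d v' w.1 x₂ y₂ := by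
        refine Finset.sum_congr rfl fun w hw => ?_
        simp only [Finset.mem_product, W] at hw
        simp only [sum_pathToLeftTree_mul_leftTreeToPath (mem_fusionSupport.1 hw.2.2), W,
          Finset.sum_product, mul_ite, mul_zero, Finset.sum_ite_irrel, Finset.sum_const_zero,
          Finset.sum_ite_eq, hw, if_true]
        exact Finset.sum_congr rfl fun v' _ => by ring
    _ = _ := by
        simp only [toPathMat, treeMul, W, Finset.sum_product, Finset.mul_sum, Finset.sum_mul]
        refine Finset.sum_congr rfl fun t _ => Finset.sum_congr rfl fun f _ => ?_
        rw [Finset.sum_comm]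
        exact Finset.sum_congr rfl fun v _ => Finset.sum_congr rfl fun v' _ => by ring

variable (B l) in
/-- The braiding of the first two strands, diagonal in the tree basis. -/
def braidDiag (_t f v : I) : R := if f = v then B.Rm l l f else 0

theorem toPathMat_braidDiag (x₁ y₁ x₂ y₂ : I) :
    B.toPathMat l a d (B.braidDiag l) x₁ y₁ x₂ y₂
      = if y₂ = y₁ then B.N y₂ l d * B.localMat l (B.Rm l l) a y₂ x₁ x₂ else 0 := by
  calc B.toPathMat l a d (B.braidDiag l) x₁ y₁ x₂ y₂
      = ∑ f ∈ B.fusionSupport l l, B.Rm l l f * B.Fbar a l l y₁ f x₁ * B.F a l l y₂ x₂ f *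
          ∑ t ∈ B.treeLabels l, B.F a f l d y₂ t * B.Fbar a f l d t y₁ := by
        rw [toPathMat_eq_sum, Finset.sum_comm]
        refine Finset.sum_congr rfl fun f hf => ?_
        simp only [braidDiag, mul_ite, ite_mul, mul_zero, zero_mul, Finset.sum_ite_eq, hf,
          if_true, Finset.mul_sum]
        exact Finset.sum_congr rfl fun t _ => by simp only [leftTreeToPath, pathToLeftTree]; ring
    _ = if y₂ = y₁ then
          B.N y₂ l d *
            ∑ f ∈ B.fusionSupport l l, B.Rm l l f * B.Fbar a l l y₂ f x₁ * B.F a l l y₂ x₂ f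
          else 0 := by
        split_ifs with hy
        · subst hy
          rw [Finset.mul_sum]
          refine Finset.sum_congr rfl fun f hf => ?_
          rw [sum_F_mul_Fbar fun t ht => mem_treeLabels.2 ⟨f, mem_fusionSupport.1 hf, ht⟩,
            if_pos rfl, one_mul, mul_comm _ (B.N y₂ l d : R), ← mul_assoc,
            mul_comm _ (B.N y₂ l d : R), mul_assoc,
            mul_natCast_N fun h => by simp [F_eq_zero_of_N_afd h]]
        · exact Finset.sum_eq_zero fun f hf => by
            rw [sum_F_mul_Fbar fun t ht => mem_treeLabels.2 ⟨f, mem_fusionSupport.1 hf, ht⟩,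
              if_neg hy]
            ring
    _ = _ := by rw [localMat_eq_sum (B.Rm_vanish l l)]

variable (B l) in
/-- The braiding of the last two strands in the tree basis `a ⊗ ((λ ⊗ λ)_f ⊗ λ)_t → d`, obtained
by conjugating the diagonal braiding with the F-move `F^{λλλ}_t`. -/
def braidTree (t f v : I) : R :=
  ∑ g ∈ B.fusionSupport l l, B.Fbar l l l t g f * B.Rm l l g * B.F l l l t v g

theorem toPathMat_braidTree {x₁ : I} (hx₁ : B.N a l x₁ ≠ 0) (y₁ x₂ y₂ : I) :
    B.toPathMat l a d (B.braidTree l) x₁ y₁ x₂ y₂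
      = if x₂ = x₁ then B.localMat l (B.Rm l l) x₁ d y₁ y₂ else 0 := by
  by_cases hxy : B.N x₁ l y₁ = 0
  · simp [toPathMat, leftTreeToPath, Fbar_eq_zero_of_N_ecd hxy, localMat_eq_zero_of_bra_left hxy]
  by_cases hyd : B.N y₁ l d = 0
  · simp [toPathMat, leftTreeToPath, Fbar_eq_zero_of_N_ecd hyd, localMat_eq_zero_of_bra_right hyd]
  calc B.toPathMat l a d (B.braidTree l) x₁ y₁ x₂ y₂
      = ∑ t ∈ B.treeLabels l, ∑ g ∈ B.fusionSupport l l, B.Rm l l g *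
          ((∑ f ∈ B.fusionSupport l l, B.Fbar l l l t g f * B.leftTreeToPath l a d f t x₁ y₁) *
            ∑ v ∈ B.fusionSupport l l, B.pathToLeftTree l a d v t x₂ y₂ * B.F l l l t v g) := by
        rw [toPathMat_eq_sum]
        refine Finset.sum_congr rfl fun t _ => ?_
        simp only [braidTree, Finset.mul_sum, Finset.sum_mul]
        conv_rhs => rw [Finset.sum_comm]; enter [2, v]; rw [Finset.sum_comm]
        rw [Finset.sum_comm]
        exact Finset.sum_congr rfl fun v _ => Finset.sum_congr rfl fun f _ =>
          Finset.sum_congr rfl fun g _ => by ring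
    _ = ∑ g ∈ B.fusionSupport l l, B.Rm l l g * B.Fbar x₁ l l d g y₁ * B.F x₂ l l d y₂ g *
          ∑ t ∈ B.treeLabels l, B.F a l g d x₂ t * B.Fbar a l g d t x₁ := by
        simp only [sum_Fbar_mul_leftTreeToPath hx₁ hxy hyd, sum_pathToLeftTree_mul_F,
          Finset.mul_sum]
        rw [Finset.sum_comm]
        exact Finset.sum_congr rfl fun g _ => Finset.sum_congr rfl fun t _ => by
          simp only [rightTreeToPath, pathToRightTree]; ring
    _ = _ := by
        split_ifs with hx
        · subst hx
          rw [localMat_eq_sum (B.Rm_vanish l l)]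
          refine Finset.sum_congr rfl fun g hg => ?_
          rw [sum_F_mul_Fbar fun t ht => mem_treeLabels_of_N (mem_fusionSupport.1 hg) ht,
            if_pos rfl, B.N_eq_one hx₁, Nat.cast_one, one_mul, one_mul,
            mul_natCast_N fun h => by simp [F_eq_zero_of_N_afd h]]
        · exact Finset.sum_eq_zero fun g hg => by
            rw [sum_F_mul_Fbar fun t ht => mem_treeLabels_of_N (mem_fusionSupport.1 hg) ht,
              if_neg hx]
            ring

theorem natCast_N_mul_F_right (t v f : I) :
    (B.N l l f : R) * B.N f l t * B.F l l l t v f = B.F l l l t v f := by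
  rw [mul_assoc, B.N_symm f l t, natCast_N_mul (a := l) (b := f) fun h => by
    simp [F_eq_zero_of_N_afd h], natCast_N_mul fun h => by simp [F_eq_zero_of_N_bcf h]]

theorem treeProj_mul_F_left (t u f : I) :
    B.treeProj l a d u t * B.F l l l t u f = B.N a t d * B.F l l l t u f := by
  calc B.treeProj l a d u t * B.F l l l t u f
      = B.N a t d * (B.N l l u * (B.N u l t * B.F l l l t u f)) := by rw [treeProj]; ring
    _ = _ := by
      rw [natCast_N_mul (a := u) fun h => by simp [F_eq_zero_of_N_ecd h],
        natCast_N_mul (a := l) fun h => by simp [F_eq_zero_of_N_abe h]]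

theorem treeProj_mul_F_right (t v u : I) :
    B.treeProj l a d u t * B.F l l l t v u = B.N a t d * B.F l l l t v u := by
  rw [treeProj, mul_right_comm, natCast_N_mul_F_right, mul_comm]

/-- The hexagon equation, read in the tree basis. -/
theorem braidTree_mul_Rm (t f v : I) :
    B.braidTree l t f v * B.Rm l l v = B.F l l l t v f * B.Rm f l t := by
  calc B.braidTree l t f v * B.Rm l l v
      = ∑ g ∈ B.fusionSupport l l,
          B.Fbar l l l t g f * (B.Rm l l v * B.F l l l t v g * B.Rm l l g) := by
        rw [braidTree, Finset.sum_mul]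
        exact Finset.sum_congr rfl fun g _ => by ring
    _ = ∑ h ∈ B.fusionSupport l l, B.F l l l t v h * B.Rm h l t *
          ∑ g ∈ B.fusionSupport l l, B.F l l l t h g * B.Fbar l l l t g f := by
        simp only [← sum_hexagon fun h hh => mem_fusionSupport.2 hh, Finset.mul_sum]
        rw [Finset.sum_comm]
        exact Finset.sum_congr rfl fun h _ => Finset.sum_congr rfl fun g _ => by ring
    _ = (B.N l l f : R) * B.N f l t * B.F l l l t v f * B.Rm f l t := by
        simp only [sum_F_mul_Fbar fun g hg => mem_fusionSupport.2 hg, mul_ite, ite_mul, mul_zero,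
          zero_mul, one_mul, Finset.sum_ite_eq']
        split_ifs with hf
        · ring
        · simp [notMem_fusionSupport.1 hf]
    _ = _ := by rw [natCast_N_mul_F_right]

theorem sum_F_mul_braidTree (t f v : I) :
    ∑ u ∈ B.fusionSupport l l, B.F l l l t u f * B.braidTree l t u v
      = B.Rm l l f * B.F l l l t v f := by
  calc ∑ u ∈ B.fusionSupport l l, B.F l l l t u f * B.braidTree l t u v
      = ∑ g ∈ B.fusionSupport l l, B.Rm l l g * B.F l l l t v g *
          ∑ u ∈ B.fusionSupport l l, B.Fbar l l l t g u * B.F l l l t u f := by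
        simp only [braidTree, Finset.mul_sum]
        rw [Finset.sum_comm]
        exact Finset.sum_congr rfl fun g _ => Finset.sum_congr rfl fun u _ => by ring
    _ = B.Rm l l f * ((B.N l l f : R) * B.N f l t * B.F l l l t v f) := by
        simp only [sum_Fbar_mul_F fun e he => mem_fusionSupport.2 he, mul_ite, ite_mul, mul_zero,
          zero_mul, one_mul, Finset.sum_ite_eq, ← B.N_symm]
        split_ifs with hf
        · ring
        · simp [notMem_fusionSupport.1 hf]
    _ = _ := by rw [natCast_N_mul_F_right]

theorem treeMul_braidDiag_left (M : I → I → I → R) (t f v : I) :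
    B.treeMul l a d (B.braidDiag l) M t f v = B.Rm l l f * B.treeProj l a d f t * M t f v := by
  simp only [treeMul, braidDiag, ite_mul, zero_mul, Finset.sum_ite_eq]
  split_ifs with hf
  · rfl
  · simp [B.Rm_vanish l l f (notMem_fusionSupport.1 hf)]

theorem treeMul_braidDiag_right (M : I → I → I → R) (t f v : I) :
    B.treeMul l a d M (B.braidDiag l) t f v = M t f v * B.treeProj l a d v t * B.Rm l l v := by
  simp only [treeMul, braidDiag, mul_ite, mul_zero, Finset.sum_ite_eq']
  split_ifs with hv
  · rfl
  · simp [B.Rm_vanish l l v (notMem_fusionSupport.1 hv)]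

theorem treeMul_braid (t f v : I) :
    B.treeMul l a d (B.braidDiag l) (B.treeMul l a d (B.braidTree l) (B.braidDiag l)) t f v
      = B.treeMul l a d (B.braidTree l) (B.treeMul l a d (B.braidDiag l) (B.braidTree l))
          t f v := by
  have hρρ (u : I) : B.treeProj l a d u t * (B.treeProj l a d u t * B.F l l l t u f)
      = B.N a t d * B.F l l l t u f := by
    rw [treeProj_mul_F_left, mul_left_comm, treeProj_mul_F_left, ← mul_assoc,
      natCast_N_mul_self]
  calc B.treeMul l a d (B.braidDiag l) (B.treeMul l a d (B.braidTree l) (B.braidDiag l)) t f v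
      = B.Rm l l f * B.Rm f l t *
          (B.treeProj l a d f t * (B.treeProj l a d v t * B.F l l l t v f)) := by
        rw [treeMul_braidDiag_left, treeMul_braidDiag_right, mul_right_comm _ _ (B.Rm l l v),
          braidTree_mul_Rm]
        ring
    _ = B.N a t d * B.Rm f l t * (B.Rm l l f * B.F l l l t v f) := by
        rw [treeProj_mul_F_left, mul_left_comm (B.treeProj l a d f t), treeProj_mul_F_right,
          ← mul_assoc (B.N a t d : R), natCast_N_mul_self]
        ring
    _ = ∑ u ∈ B.fusionSupport l l, B.treeProj l a d u t *
          (B.treeProj l a d u t * B.F l l l t u f) * B.Rm f l t * B.braidTree l t u v := by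
        rw [← sum_F_mul_braidTree, Finset.mul_sum]
        exact Finset.sum_congr rfl fun u _ => by rw [hρρ]; ring
    _ = _ := by
        rw [treeMul]
        exact Finset.sum_congr rfl fun u _ => by
          rw [treeMul_braidDiag_left]
          linear_combination (-B.treeProj l a d u t * B.treeProj l a d u t *
            B.braidTree l t u v) * braidTree_mul_Rm (B := B) (l := l) t f u

theorem sum_sum_toPathMat_mul (M₁ M₂ M₃ : I → I → I → R) (x₁ y₁ x₂ y₂ : I) :
    ∑ p ∈ B.fusionSupport a l ×ˢ B.pathLabels l a, ∑ q ∈ B.fusionSupport a l ×ˢ B.pathLabels l a,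
        B.toPathMat l a d M₁ x₁ y₁ p.1 p.2 * B.toPathMat l a d M₂ p.1 p.2 q.1 q.2 *
          B.toPathMat l a d M₃ q.1 q.2 x₂ y₂
      = B.toPathMat l a d (B.treeMul l a d M₁ (B.treeMul l a d M₂ M₃)) x₁ y₁ x₂ y₂ := by
  simp only [mul_assoc, ← Finset.mul_sum, sum_toPathMat_mul_toPathMat]

theorem sum_sum_toPathMat_braidDiag_braidTree_braidDiag {x y x' y' : I} (hx : B.N a l x ≠ 0)
    (hx' : B.N a l x' ≠ 0) (hxy : B.N x l y ≠ 0) (hx'y' : B.N x' l y' ≠ 0) (hyd : B.N y l d ≠ 0)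
    (hy'd : B.N y' l d ≠ 0) :
    ∑ p ∈ B.fusionSupport a l ×ˢ B.pathLabels l a, ∑ q ∈ B.fusionSupport a l ×ˢ B.pathLabels l a,
        B.toPathMat l a d (B.braidDiag l) x' y' p.1 p.2 *
          B.toPathMat l a d (B.braidTree l) p.1 p.2 q.1 q.2 *
          B.toPathMat l a d (B.braidDiag l) q.1 q.2 x y
      = ∑ z ∈ B.fusionSupport a l, B.localMat l (B.Rm l l) a y' x' z *
          B.localMat l (B.Rm l l) z d y' y * B.localMat l (B.Rm l l) a y z x := by
  rw [Finset.sum_congr rfl fun p hp => Finset.sum_congr rfl fun q _ => by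
    rw [toPathMat_braidDiag, toPathMat_braidDiag,
      toPathMat_braidTree (mem_fusionSupport.1 (Finset.mem_product.1 hp).1)]]
  simp only [Finset.sum_product, ite_mul, mul_ite, zero_mul, mul_zero, Finset.sum_ite_irrel,
    Finset.sum_const_zero, Finset.sum_ite_eq, Finset.sum_ite_eq', mem_pathLabels_of_N hx hxy,
    mem_pathLabels_of_N hx' hx'y', if_true, B.N_eq_one hyd, B.N_eq_one hy'd]
  exact Finset.sum_congr rfl fun z hz => by rw [if_pos hz, Nat.cast_one]; ring

theorem sum_sum_toPathMat_braidTree_braidDiag_braidTree {x y x' y' : I} (hx : B.N a l x ≠ 0)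
    (hx' : B.N a l x' ≠ 0) :
    ∑ p ∈ B.fusionSupport a l ×ˢ B.pathLabels l a, ∑ q ∈ B.fusionSupport a l ×ˢ B.pathLabels l a,
        B.toPathMat l a d (B.braidTree l) x' y' p.1 p.2 *
          B.toPathMat l a d (B.braidDiag l) p.1 p.2 q.1 q.2 *
          B.toPathMat l a d (B.braidTree l) q.1 q.2 x y
      = ∑ w ∈ B.pathLabels l a, B.localMat l (B.Rm l l) x' d y' w *
          B.localMat l (B.Rm l l) a w x' x * B.localMat l (B.Rm l l) x d w y := by
  rw [Finset.sum_congr rfl fun p _ => Finset.sum_congr rfl fun q hq => by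
    rw [toPathMat_braidDiag, toPathMat_braidTree hx',
      toPathMat_braidTree (mem_fusionSupport.1 (Finset.mem_product.1 hq).1)]]
  simp only [Finset.sum_product, ite_mul, mul_ite, zero_mul, mul_zero, Finset.sum_ite_irrel,
    Finset.sum_const_zero, Finset.sum_ite_eq, Finset.sum_ite_eq', mem_fusionSupport.2 hx,
    if_true]
  rw [Finset.sum_comm]
  refine Finset.sum_congr rfl fun w hw => ?_
  simp only [hw, if_true, Finset.sum_ite_eq', mem_fusionSupport.2 hx']
  rw [mul_assoc, mul_assoc, mul_left_comm _ (B.localMat _ _ _ _ _ _),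
    natCast_N_mul fun h => by simp [localMat_eq_zero_of_bra_right h], mul_assoc]

theorem sum_localMat_braid {a d x y x' y' : I} (hx : B.N a l x ≠ 0) (hx' : B.N a l x' ≠ 0)
    (hxy : B.N x l y ≠ 0) (hx'y' : B.N x' l y' ≠ 0) (hyd : B.N y l d ≠ 0)
    (hy'd : B.N y' l d ≠ 0) :
    ∑ᶠ z, B.localMat l (B.Rm l l) a y' x' z * B.localMat l (B.Rm l l) z d y' y *
        B.localMat l (B.Rm l l) a y z x
      = ∑ᶠ w, B.localMat l (B.Rm l l) x' d y' w * B.localMat l (B.Rm l l) a w x' x *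
        B.localMat l (B.Rm l l) x d w y := by
  rw [finsum_eq_sum_of_support_subset (s := B.fusionSupport a l) _ fun z hz =>
      mem_fusionSupport.2 fun h => hz (by simp [localMat_eq_zero_of_ket_left h]),
    finsum_eq_sum_of_support_subset (s := B.pathLabels l a) _ fun w hw => by
      by_contra hw'
      exact hw (by
        simp [localMat_eq_zero_of_ket_left (not_imp_comm.1 (mem_pathLabels_of_N hx') hw')]),
    ← sum_sum_toPathMat_braidDiag_braidTree_braidDiag hx hx' hxy hx'y' hyd hy'd,
    ← sum_sum_toPathMat_braidTree_braidDiag_braidTree hx hx', sum_sum_toPathMat_mul,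
    sum_sum_toPathMat_mul]
  simp only [toPathMat, treeMul_braid]

end TreeBasis

section Chain

variable {B : BraidedTensorSystem R I} {l : I} {L : ℕ}

variable (B l) in
/-- The operator `Σ_m r_m p_i^{(m)}` on the homogeneous chain; `Rmat` and `RbarMat` are the cases
`r = R^{λλ}` and `r = R̄^{λλ}`. -/
def chainOp (L : ℕ) (r : I → R) (i : ℕ) (μ' μ : Fin (L + 1) → I) : R :=
  ∑ᶠ m, r m * B.pMat L (fun _ => l) i m μ' μ

theorem chainOp_apply {r : I → R} (hr : ∀ m, B.N l l m = 0 → r m = 0) (i : ℕ)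
    (μ' μ : Fin (L + 1) → I) :
    B.chainOp l L r i μ' μ = if ∀ j ≠ site L i, μ j = μ' j then
      B.localMat l r (μ (site L (i - 1))) (μ (site L (i + 1))) (μ' (site L i)) (μ (site L i))
      else 0 := by
  have hfin : (support fun m => r m *
      B.Fbar (μ (site L (i - 1))) l l (μ (site L (i + 1))) m (μ' (site L i)) *
      B.F (μ (site L (i - 1))) l l (μ (site L (i + 1))) (μ (site L i)) m).Finite :=
    (B.N_finite l l).subset fun m hm h0 => hm (by simp [hr m h0])
  calc B.chainOp l L r i μ' μ
      = (∏ j ∈ Finset.univ.erase (site L i), if μ j = μ' j then 1 else 0) *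
          B.localMat l r (μ (site L (i - 1))) (μ (site L (i + 1))) (μ' (site L i))
            (μ (site L i)) := by
        rw [localMat, mul_finsum' _ _ hfin]
        exact finsum_congr fun m => by simp only [pMat]; ring
    _ = _ := by simp [Finset.prod_boole]

variable {I0 : Set I}

theorem isPath_update_site {μ : Fin (L + 1) → I} (hμ : B.IsPath L I0 (fun _ => l) μ) {i : ℕ}
    (hi : 1 ≤ i) (hiL : i + 1 ≤ L) {z : I} (hz₁ : B.N (μ (site L (i - 1))) l z ≠ 0)
    (hz₂ : B.N z l (μ (site L (i + 1))) ≠ 0) :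
    B.IsPath L I0 (fun _ => l) (update μ (site L i) z) := by
  refine ⟨?_, fun j hj hjL => ?_⟩
  · rw [update_of_ne (by simpa using site_ne (L := L) (by omega) (by omega) (by omega : 0 ≠ i))]
    exact hμ.1
  rcases eq_or_ne j i with rfl | hji
  · rw [update_of_ne (site_ne (by omega) (by omega) (by omega)), update_self]
    exact B.N_eq_one hz₁
  rcases eq_or_ne j (i + 1) with rfl | hji'
  · rw [Nat.add_sub_cancel, update_self, update_of_ne (site_ne (by omega) (by omega) (by omega))]
    exact B.N_eq_one hz₂
  rw [update_of_ne (site_ne (by omega) (by omega) (by omega)),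
    update_of_ne (site_ne (by omega) (by omega) hji)]
  exact hμ.2 j hj hjL

theorem localMat_eq_zero_of_not_isPath_update {r : I → R} {μ : Fin (L + 1) → I}
    (hμ : B.IsPath L I0 (fun _ => l) μ) {i : ℕ} (hi : 1 ≤ i) (hiL : i + 1 ≤ L) {z : I}
    (hz : ¬ B.IsPath L I0 (fun _ => l) (update μ (site L i) z)) :
    B.localMat l r (μ (site L (i - 1))) (μ (site L (i + 1))) (μ (site L i)) z = 0 := by
  by_cases hz₁ : B.N (μ (site L (i - 1))) l z = 0
  · exact localMat_eq_zero_of_ket_left hz₁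
  by_cases hz₂ : B.N z l (μ (site L (i + 1))) = 0
  · exact localMat_eq_zero_of_ket_right hz₂
  exact absurd (isPath_update_site hμ hi hiL hz₁ hz₂) hz

/-- Multiplying by `Σ_m r_m p_i^{(m)}` on the left only moves the label at site `i`, so the
sum over intermediate paths collapses to a sum over that label. -/
theorem mulMat_chainOp {r : I → R} (hr : ∀ m, B.N l l m = 0 → r m = 0) {i : ℕ} (hi : 1 ≤ i)
    (hiL : i + 1 ≤ L) (A : (Fin (L + 1) → I) → (Fin (L + 1) → I) → R) (A' : I → R)
    {μ' μ : Fin (L + 1) → I} (hμ' : B.IsPath L I0 (fun _ => l) μ')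
    (hA : ∀ z, B.IsPath L I0 (fun _ => l) (update μ' (site L i) z) →
      A (update μ' (site L i) z) μ = A' z) :
    B.mulMat L I0 (fun _ => l) (B.chainOp l L r i) A μ' μ
      = ∑ᶠ z, B.localMat l r (μ' (site L (i - 1))) (μ' (site L (i + 1))) (μ' (site L i)) z *
          A' z := by
  have hne : site L (i - 1) ≠ site L i ∧ site L (i + 1) ≠ site L i :=
    ⟨site_ne (by omega) (by omega) (by omega), site_ne (by omega) (by omega) (by omega)⟩
  have hentry : ∀ z, B.chainOp l L r i μ' (update μ' (site L i) z)
      = B.localMat l r (μ' (site L (i - 1))) (μ' (site L (i + 1))) (μ' (site L i)) z := by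
    intro z
    rw [chainOp_apply hr, if_pos fun j hj => update_of_ne hj _ _]
    simp only [update_of_ne hne.1, update_of_ne hne.2, update_self]
  have hrange : ∀ ν ∈ support fun ν => B.chainOp l L r i μ' ν * A ν μ,
      ν ∈ {x | B.IsPath L I0 (fun _ => l) x} ↔ ν ∈ Set.range (update μ' (site L i)) := by
    intro ν hν
    have hagree : ∀ j ≠ site L i, ν j = μ' j := by
      by_contra h
      exact hν (by simp only [chainOp_apply hr, if_neg h, zero_mul])
    have hν_eq : update μ' (site L i) (ν (site L i)) = ν := by
      funext j
      rcases eq_or_ne j (site L i) with rfl | hj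
      · exact update_self ..
      · rw [update_of_ne hj, hagree j hj]
    refine ⟨fun _ => ⟨_, hν_eq⟩, ?_⟩
    rintro ⟨z, rfl⟩
    by_contra hz
    exact hν (by simp only [hentry, localMat_eq_zero_of_not_isPath_update hμ' hi hiL hz, zero_mul])
  rw [mulMat, finsum_mem_inter_support_eq' _ _ _ hrange, finsum_mem_range fun z z' h => by
    simpa using congrFun h (site L i)]
  refine finsum_congr fun z => ?_
  rw [hentry]
  by_cases hz : B.IsPath L I0 (fun _ => l) (update μ' (site L i) z)
  · rw [hA z hz]
  · rw [localMat_eq_zero_of_not_isPath_update hμ' hi hiL hz, zero_mul, zero_mul]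

theorem mulMat_chainOp_chainOp {r r' : I → R} (hr : ∀ m, B.N l l m = 0 → r m = 0)
    (hr' : ∀ m, B.N l l m = 0 → r' m = 0) {i i' : ℕ} (hi : 1 ≤ i) (hiL : i + 1 ≤ L)
    (hi'L : i' ≤ L) (hii' : i ≠ i') {ν μ : Fin (L + 1) → I}
    (hν : B.IsPath L I0 (fun _ => l) ν) :
    B.mulMat L I0 (fun _ => l) (B.chainOp l L r i) (B.chainOp l L r' i') ν μ
      = if ∀ j, j ≠ site L i → j ≠ site L i' → μ j = ν j then
          B.localMat l r (ν (site L (i - 1))) (ν (site L (i + 1))) (ν (site L i)) (μ (site L i)) *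
          B.localMat l r' (μ (site L (i' - 1))) (μ (site L (i' + 1))) (ν (site L i'))
            (μ (site L i'))
        else 0 := by
  have hsite : site L i' ≠ site L i := site_ne hi'L (by omega) hii'.symm
  rw [mulMat_chainOp hr hi hiL _ _ hν fun _ _ => rfl,
    finsum_eq_single _ (μ (site L i)) fun z hz => by
      rw [chainOp_apply hr', if_neg fun h => hz (by simpa using (h _ hsite.symm).symm), mul_zero]]
  have hcond : (∀ j ≠ site L i', μ j = update ν (site L i) (μ (site L i)) j)
      ↔ ∀ j, j ≠ site L i → j ≠ site L i' → μ j = ν j := by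
    refine ⟨fun h j hj hj' => by simpa [update_of_ne hj] using h j hj', fun h j hj' => ?_⟩
    rcases eq_or_ne j (site L i) with rfl | hj
    · simp
    · rw [update_of_ne hj, h j hj hj']
  rw [chainOp_apply hr', update_of_ne hsite]
  simp only [hcond, mul_ite, mul_zero]

theorem mulMat_chainOp_eq_deltaMat {r r' : I → R} (hr : ∀ m, B.N l l m = 0 → r m = 0)
    (hr' : ∀ m, B.N l l m = 0 → r' m = 0) (hrr' : ∀ m, r m * r' m = B.N l l m) {i : ℕ}
    (hi : 1 ≤ i) (hiL : i + 1 ≤ L) {μ' μ : Fin (L + 1) → I}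
    (hμ' : B.IsPath L I0 (fun _ => l) μ') (hμ : B.IsPath L I0 (fun _ => l) μ) :
    B.mulMat L I0 (fun _ => l) (B.chainOp l L r i) (B.chainOp l L r' i) μ' μ = deltaMat L μ' μ := by
  rw [mulMat_chainOp hr hi hiL _ _ hμ' fun z _ => rfl, deltaMat, Fintype.prod_boole]
  by_cases hC : ∀ j ≠ site L i, μ j = μ' j
  · have hC' : ∀ z, (∀ j ≠ site L i, μ j = update μ' (site L i) z j) := fun z j hj => by
      rw [update_of_ne hj, hC j hj]
    rw [finsum_congr fun z => by rw [chainOp_apply hr', if_pos (hC' z), update_self]]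
    rw [← hC _ (site_ne (by omega) (by omega) (by omega)),
      ← hC _ (site_ne (by omega) (by omega) (by omega)), sum_localMat_mul_localMat hr hr' hrr',
      hμ.N_site hi (by omega), hμ.N_site_succ hiL]
    have hiff : (∀ j, μ j = μ' j) ↔ μ (site L i) = μ' (site L i) := by
      refine ⟨fun h => h _, fun h j => ?_⟩
      rcases eq_or_ne j (site L i) with rfl | hj
      exacts [h, hC j hj]
    simp only [hiff, Nat.cast_one, mul_one]
  · have hC' : ∀ z, ¬ (∀ j ≠ site L i, μ j = update μ' (site L i) z j) := fun z h =>
      hC fun j hj => by rw [h j hj, update_of_ne hj]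
    rw [finsum_congr fun z => by rw [chainOp_apply hr', if_neg (hC' z), mul_zero], finsum_zero]
    exact (if_neg fun h => hC fun j _ => h j).symm

theorem mulMat_chainOp_comm_of_add_two_le {r r' : I → R} (hr : ∀ m, B.N l l m = 0 → r m = 0)
    (hr' : ∀ m, B.N l l m = 0 → r' m = 0) {i i' : ℕ} (hi : 1 ≤ i) (hii' : i + 2 ≤ i')
    (hi'L : i' + 1 ≤ L) {μ' μ : Fin (L + 1) → I} (hμ' : B.IsPath L I0 (fun _ => l) μ') :
    B.mulMat L I0 (fun _ => l) (B.chainOp l L r i) (B.chainOp l L r' i') μ' μ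
      = B.mulMat L I0 (fun _ => l) (B.chainOp l L r' i') (B.chainOp l L r i) μ' μ := by
  rw [mulMat_chainOp_chainOp hr hr' hi (by omega) (by omega) (by omega) hμ',
    mulMat_chainOp_chainOp hr' hr (by omega) hi'L (by omega) (by omega) hμ']
  by_cases hC : ∀ j, j ≠ site L i → j ≠ site L i' → μ j = μ' j
  · have h (k : ℕ) (hk : k ≤ L) (hki : k ≠ i) (hki' : k ≠ i') : μ (site L k) = μ' (site L k) :=
      hC _ (site_ne hk (by omega) hki) (site_ne hk (by omega) hki')
    rw [if_pos hC, if_pos fun j hj' hj => hC j hj hj', h (i - 1) (by omega) (by omega) (by omega),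
      h (i + 1) (by omega) (by omega) (by omega), h (i' - 1) (by omega) (by omega) (by omega),
      h (i' + 1) (by omega) (by omega) (by omega), mul_comm]
  · rw [if_neg hC, if_neg fun h => hC fun j hj hj' => h j hj' hj]

theorem mulMat_chainOp_mulMat_chainOp_chainOp {r r' r'' : I → R}
    (hr : ∀ m, B.N l l m = 0 → r m = 0) (hr' : ∀ m, B.N l l m = 0 → r' m = 0)
    (hr'' : ∀ m, B.N l l m = 0 → r'' m = 0) {s s' : ℕ} (hs : 1 ≤ s) (hsL : s + 1 ≤ L)
    (hs' : 1 ≤ s') (hs'L : s' + 1 ≤ L) (hss' : s ≠ s') {μ' μ : Fin (L + 1) → I}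
    (hμ' : B.IsPath L I0 (fun _ => l) μ') :
    B.mulMat L I0 (fun _ => l) (B.chainOp l L r s)
        (B.mulMat L I0 (fun _ => l) (B.chainOp l L r' s') (B.chainOp l L r'' s)) μ' μ
      = if ∀ j, j ≠ site L s → j ≠ site L s' → μ j = μ' j then
          ∑ᶠ z, B.localMat l r (μ' (site L (s - 1))) (μ' (site L (s + 1))) (μ' (site L s)) z *
            (B.localMat l r' (update μ' (site L s) z (site L (s' - 1)))
              (update μ' (site L s) z (site L (s' + 1))) (μ' (site L s')) (μ (site L s')) *
            B.localMat l r'' (μ (site L (s - 1))) (μ (site L (s + 1))) z (μ (site L s)))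
        else 0 := by
  have hsite : site L s' ≠ site L s := site_ne (by omega) (by omega) hss'.symm
  rw [mulMat_chainOp hr hs hsL _ _ hμ' fun z hz => by
    rw [mulMat_chainOp_chainOp hr' hr'' hs' hs'L (by omega) hss'.symm hz, update_of_ne hsite,
      update_self]]
  have hcond (z : I) : (∀ j, j ≠ site L s' → j ≠ site L s → μ j = update μ' (site L s) z j)
      ↔ ∀ j, j ≠ site L s → j ≠ site L s' → μ j = μ' j :=
    forall_congr' fun j => Imp.swap.trans <| imp_congr_right fun hj => by rw [update_of_ne hj]
  simp only [hcond]
  split_ifs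
  · rfl
  · simp only [mul_zero, finsum_zero]

theorem mulMat_chainOp_braid {i : ℕ} (hi : 1 ≤ i) (hiL : i + 2 ≤ L) {μ' μ : Fin (L + 1) → I}
    (hμ' : B.IsPath L I0 (fun _ => l) μ') (hμ : B.IsPath L I0 (fun _ => l) μ) :
    B.mulMat L I0 (fun _ => l) (B.chainOp l L (B.Rm l l) i)
        (B.mulMat L I0 (fun _ => l) (B.chainOp l L (B.Rm l l) (i + 1))
          (B.chainOp l L (B.Rm l l) i)) μ' μ
      = B.mulMat L I0 (fun _ => l) (B.chainOp l L (B.Rm l l) (i + 1))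
        (B.mulMat L I0 (fun _ => l) (B.chainOp l L (B.Rm l l) i)
          (B.chainOp l L (B.Rm l l) (i + 1))) μ' μ := by
  have hr := B.Rm_vanish l l
  rw [mulMat_chainOp_mulMat_chainOp_chainOp hr hr hr hi (by omega) (by omega) (by omega)
      (by omega) hμ',
    mulMat_chainOp_mulMat_chainOp_chainOp hr hr hr (by omega) (by omega) hi (by omega) (by omega)
      hμ']
  simp only [Nat.add_sub_cancel, update_self,
    update_of_ne (site_ne (L := L) (j := i + 1 + 1) (k := i) (by omega) (by omega) (by omega)),
    update_of_ne (site_ne (L := L) (j := i - 1) (k := i + 1) (by omega) (by omega) (by omega)),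
    Imp.swap (a := _ ≠ site L (i + 1))]
  split_ifs with hC
  · have h (k : ℕ) (hk : k ≤ L) (hki : k ≠ i) (hki' : k ≠ i + 1) : μ (site L k) = μ' (site L k) :=
      hC _ (site_ne hk (by omega) hki) (site_ne hk (by omega) hki')
    have hprev := h (i - 1) (by omega) (by omega) (by omega)
    have hnext := h (i + 1 + 1) (by omega) (by omega) (by omega)
    have hN {b c : I} (h : B.N b l c = 1) : B.N b l c ≠ 0 := h ▸ one_ne_zero
    have hx := hμ.N_site hi (by omega)
    have hyd := hμ.N_site_succ (j := i + 1) (by omega)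
    rw [hprev] at hx
    rw [hnext] at hyd
    rw [hprev, hnext]
    simp only [← mul_assoc]
    exact sum_localMat_braid (hN hx) (hN (hμ'.N_site hi (by omega)))
      (hN (hμ.N_site_succ (by omega))) (hN (hμ'.N_site_succ (by omega))) (hN hyd)
      (hN (hμ'.N_site_succ (by omega)))
  · rfl

end Chain

end BraidedTensorSystem

theorem braiding_operators_invertible_and_braid_general
    {R : Type*} [CommRing R] {I : Type*}
    (BTS : BraidedTensorSystem R I) (lam0 : I)
    (L : ℕ) (I0 : Set I) :
    (∀ i : ℕ, 1 ≤ i → i + 1 ≤ L →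
      BTS.toTensorSystem.MatEqOn L I0 (fun _ => lam0)
      (BTS.toTensorSystem.mulMat L I0 (fun _ => lam0)
      (BTS.Rmat L lam0 (i))
      (BTS.RbarMat L lam0 (i)))
      (deltaMat L)
      ∧ BTS.toTensorSystem.MatEqOn L I0 (fun _ => lam0)
      (BTS.toTensorSystem.mulMat L I0 (fun _ => lam0)
      (BTS.RbarMat L lam0 (i))
      (BTS.Rmat L lam0 (i)))
      (deltaMat L))
    ∧ (∀ i : ℕ, 1 ≤ i → i + 2 ≤ L →
      BTS.toTensorSystem.MatEqOn L I0 (fun _ => lam0)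
      (BTS.toTensorSystem.mulMat L I0 (fun _ => lam0)
      (BTS.Rmat L lam0 (i))
      (BTS.toTensorSystem.mulMat L I0 (fun _ => lam0)
      (BTS.Rmat L lam0 (i + 1))
      (BTS.Rmat L lam0 (i))))
      (BTS.toTensorSystem.mulMat L I0 (fun _ => lam0)
      (BTS.Rmat L lam0 (i + 1))
      (BTS.toTensorSystem.mulMat L I0 (fun _ => lam0)
      (BTS.Rmat L lam0 (i))
      (BTS.Rmat L lam0 (i + 1)))))
    ∧ (∀ i i' : ℕ, 1 ≤ i → i + 2 ≤ i' → i' + 1 ≤ L →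
      BTS.toTensorSystem.MatEqOn L I0 (fun _ => lam0)
      (BTS.toTensorSystem.mulMat L I0 (fun _ => lam0)
      (BTS.Rmat L lam0 (i))
      (BTS.Rmat L lam0 (i')))
      (BTS.toTensorSystem.mulMat L I0 (fun _ => lam0)
      (BTS.Rmat L lam0 (i'))
      (BTS.Rmat L lam0 (i)))) := by
  open BraidedTensorSystem in
  have hR := BTS.Rm_vanish lam0 lam0
  have hRbar := BTS.Rbarm_vanish lam0 lam0
  refine ⟨fun i hi hiL => ⟨fun μ' μ hμ' hμ => ?_, fun μ' μ hμ' hμ => ?_⟩,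
    fun i hi hiL μ' μ hμ' hμ => mulMat_chainOp_braid hi hiL hμ' hμ,
    fun i i' hi hii' hi'L μ' μ hμ' _ => mulMat_chainOp_comm_of_add_two_le hR hR hi hii' hi'L hμ'⟩
  · exact mulMat_chainOp_eq_deltaMat hR hRbar (BTS.Rm_Rbarm lam0 lam0) hi hiL hμ' hμ
  · exact mulMat_chainOp_eq_deltaMat hRbar hR
      (fun m => (mul_comm _ _).trans (BTS.Rm_Rbarm lam0 lam0 m)) hi hiL hμ' hμ

/-- the braiding operators are invertible and satisfy the braid
relations on the homogeneous chain. -/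
theorem braiding_operators_invertible_and_braid
    {R : Type*} [CommRing R] {I : Type*}
    (BTS : BraidedTensorSystem R I) (lam0 : I)
    (L : ℕ) (I0 : Set I) (hI0 : I0.Finite) :
    (∀ i : ℕ, 1 ≤ i → i + 1 ≤ L →
      BTS.toTensorSystem.MatEqOn L I0 (fun _ => lam0)
      (BTS.toTensorSystem.mulMat L I0 (fun _ => lam0)
      (BTS.Rmat L lam0 (i))
      (BTS.RbarMat L lam0 (i)))
      (deltaMat L)
      ∧ BTS.toTensorSystem.MatEqOn L I0 (fun _ => lam0)
      (BTS.toTensorSystem.mulMat L I0 (fun _ => lam0)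
      (BTS.RbarMat L lam0 (i))
      (BTS.Rmat L lam0 (i)))
      (deltaMat L))
    ∧ (∀ i : ℕ, 1 ≤ i → i + 2 ≤ L →
      BTS.toTensorSystem.MatEqOn L I0 (fun _ => lam0)
      (BTS.toTensorSystem.mulMat L I0 (fun _ => lam0)
      (BTS.Rmat L lam0 (i))
      (BTS.toTensorSystem.mulMat L I0 (fun _ => lam0)
      (BTS.Rmat L lam0 (i + 1))
      (BTS.Rmat L lam0 (i))))
      (BTS.toTensorSystem.mulMat L I0 (fun _ => lam0)
      (BTS.Rmat L lam0 (i + 1))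
      (BTS.toTensorSystem.mulMat L I0 (fun _ => lam0)
      (BTS.Rmat L lam0 (i))
      (BTS.Rmat L lam0 (i + 1)))))
    ∧ (∀ i i' : ℕ, 1 ≤ i → i + 2 ≤ i' → i' + 1 ≤ L →
      BTS.toTensorSystem.MatEqOn L I0 (fun _ => lam0)
      (BTS.toTensorSystem.mulMat L I0 (fun _ => lam0)
      (BTS.Rmat L lam0 (i))
      (BTS.Rmat L lam0 (i')))
      (BTS.toTensorSystem.mulMat L I0 (fun _ => lam0)
      (BTS.Rmat L lam0 (i'))
      (BTS.Rmat L lam0 (i)))) :=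
  braiding_operators_invertible_and_braid_general BTS lam0 L I0
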